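/- Let x, y, z be natural numbers with x ≠ y and y ≠ z. Then vbit(x, y) ≠ vbit(y, z). -/

import Mathlib

open scoped Classical

/-- `lbit x y` is the least index `i` such that the `i`-th binary digits of `x` and `y`
differ (defined as `0` if `x = y`). -/
noncomputable def lbit (x y : ℕ) : ℕ :=
  if h : ∃ i, x.testBit i ≠ y.testBit i then Nat.find h else 0

/-- `vbit x y = 2 * lbit x y + a`, where `a` is the bit of `x` at position `lbit x y`. -/
noncomputable def vbit (x y : ℕ) : ℕ :=
  2 * lbit x y + (if Nat.testBit x (lbit x y) then 1 else 0)

/-! `vbit x y` encodes the pair `(lbit x y, x.testBit (lbit x y))`, so equal values force equal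
positions and equal bits; but at position `lbit x y` the bit of `x` differs from that of `y`. -/

lemma testBit_lbit_ne {x y : ℕ} (h : x ≠ y) : x.testBit (lbit x y) ≠ y.testBit (lbit x y) := by
  have hex : ∃ i, x.testBit i ≠ y.testBit i := by
    by_contra! hc
    exact h (Nat.eq_of_testBit_eq hc)
  rw [lbit, dif_pos hex]
  exact Nat.find_spec hex

lemma vbit_eq_bit (x y : ℕ) : vbit x y = Nat.bit (x.testBit (lbit x y)) (lbit x y) := by
  rw [vbit, Nat.bit_val]
  cases x.testBit (lbit x y) <;> rfl

theorem stmt2_general (x y z : ℕ) (hxy : x ≠ y) : vbit x y ≠ vbit y z := by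
  intro h
  rw [vbit_eq_bit, vbit_eq_bit] at h
  have hl : lbit x y = lbit y z := by
    rw [← Nat.bit_div_two (x.testBit _) (lbit x y), h, Nat.bit_div_two]
  have hb : x.testBit (lbit x y) = y.testBit (lbit y z) := by
    rw [← Nat.testBit_bit_zero (x.testBit _) (lbit x y), h, Nat.testBit_bit_zero]
  exact testBit_lbit_ne hxy (by rw [hb, hl])

/-- If `x ≠ y` and `y ≠ z`, then `vbit x y ≠ vbit y z`. -/
theorem stmt2 (x y z : ℕ) (hxy : x ≠ y) (hyz : y ≠ z) : vbit x y ≠ vbit y z :=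
  stmt2_general x y z hxy
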